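/- For any spiny symmetric set X and any n ≥ 2, the n-coskeleton cosk_n X is isomorphic to the symmetric subset of Mat(X₁) whose m-simplices are those matrices M ∈ Mat(X₁)_m such that α*M ∈ μ_X(Xₙ) for every map α : [n] → [m] in Υ. In particular, cosk_n X is spiny. -/

import Mathlib

open CategoryTheory Opposite

/-- The skeleton of the category of finite nonempty sets: objects are natural
numbers `n`, standing for `[n] = {0, …, n}`, morphisms are all functions. -/
def Ups : Type := ℕ

/-- The natural number underlying an object of `Ups`. -/
def Ups.toNat : Ups → ℕ := fun n => n

/-- The object `[n]` of `Ups`. -/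
def Ups.of : ℕ → Ups := fun n => n

instance : Category Ups where
  Hom n m := Fin (n.toNat + 1) → Fin (m.toNat + 1)
  id _ := _root_.id
  comp f g := g ∘ f

/-- A symmetric set is a presheaf on `Ups`. -/
abbrev SymmSet := Upsᵒᵖ ⥤ Type

/-- The map `ε_{ij} : [1] → [n]` sending `0, 1` to `i, j`. -/
def eps (n : ℕ) (i j : Fin (n + 1)) : Ups.of 1 ⟶ Ups.of n :=
  fun k => if k = 0 then i else j

/-- The set of `n`-simplices of a symmetric set. -/
abbrev simp (X : SymmSet) (n : ℕ) : Type := X.obj (op (Ups.of n))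

/-- The Bousfield–Segal map `𝓑ₙ : Xₙ → X₁ⁿ`, `x ↦ (ε₀₁*x, …, ε₀ₙ*x)`. -/
def BS (X : SymmSet) (n : ℕ) (x : simp X n) : Fin n → simp X 1 :=
  fun k => X.map (eps n 0 k.succ).op x

/-- The Segal map `𝓔ₙ : Xₙ → X₁ⁿ`, `x ↦ (ε₀₁*x, ε₁₂*x, …, ε₍ₙ₋₁₎ₙ*x)`. -/
def ES (X : SymmSet) (n : ℕ) (x : simp X n) : Fin n → simp X 1 :=
  fun k => X.map (eps n k.castSucc k.succ).op x

/-- The canonical map `μ_X` to matrices, `x ↦ (ε_{ij}* x)_{ij}`. -/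
def muMat (X : SymmSet) (n : ℕ) (x : simp X n) :
    Fin (n + 1) → Fin (n + 1) → simp X 1 :=
  fun i j => X.map (eps n i j).op x

/-- A symmetric set is spiny if all Bousfield–Segal maps are injective. -/
def Spiny (X : SymmSet) : Prop := ∀ n, Function.Injective (BS X n)
/-- The matrix symmetric set `Mat(S)`: `n`-simplices are functions `[n]×[n] → S`. -/
def MatS (S : Type) : SymmSet where
  obj k := Fin (k.unop.toNat + 1) → Fin (k.unop.toNat + 1) → S
  map f := TypeCat.ofHom fun M => fun a b => M (f.unop a) (f.unop b)
  map_id := by intros; rfl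
  map_comp := by intros; rfl

/-- An `n`-simplex is degenerate if it is `ρ* y` for a noninvertible surjection
`ρ : [n] ↠ [m]` and an `m`-simplex `y`. -/
def Degen (X : SymmSet) (n : ℕ) (x : simp X n) : Prop :=
  ∃ (m : ℕ) (ρ : Ups.of n ⟶ Ups.of m), Function.Surjective ρ ∧
    ¬ Function.Bijective ρ ∧ ∃ y : simp X m, x = X.map ρ.op y

/-- The `d`-skeleton of a symmetric set, as a symmetric subset. -/
def skel (X : SymmSet) (d : ℕ) : SymmSet where
  obj k := {x : X.obj k // ∃ (i : ℕ) (_ : i ≤ d) (α : k.unop ⟶ Ups.of i)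
      (y : simp X i), x = X.map α.op y}
  map f := TypeCat.ofHom fun x => ⟨X.map f x.1, by
    obtain ⟨i, hi, α, y, hy⟩ := x.2
    refine ⟨i, hi, f.unop ≫ α, y, ?_⟩
    rw [hy, ← FunctorToTypes.map_comp_apply]
    rfl⟩
  map_id := by
    intro k; ext x
    simp
  map_comp := by
    intro k k' k'' f g; ext x
    simp

/-- A symmetric set is `d`-skeletal when all simplices above dimension `d`
are degenerate. -/
def SkeletalLE (X : SymmSet) (d : ℕ) : Prop :=
  ∀ n, d < n → ∀ x : simp X n, Degen X n x

/-- `X` has dimension `d` when `d` is the least integer such that `X` is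
`d`-skeletal. -/
def HasDim (X : SymmSet) (d : ℕ) : Prop :=
  IsLeast {m | SkeletalLE X m} d

/-- A symmetric set is reduced when it has exactly one `0`-simplex. -/
def Reduced (X : SymmSet) : Prop :=
  Nonempty (simp X 0) ∧ Subsingleton (simp X 0)

/-- A partial group is a reduced spiny symmetric set. -/
def IsPartialGroup (X : SymmSet) : Prop := Reduced X ∧ Spiny X

/-- A partial group is trivial when it has no nonidentity elements. -/
def TrivialPG (X : SymmSet) : Prop := Subsingleton (simp X 1)

/-- The order of a partial group: the number of its elements (edges). -/
noncomputable def orderPG (X : SymmSet) : ℕ := Nat.card (simp X 1)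

/-- An edge is an identity if it is in the image of the degeneracy `X₀ → X₁`. -/
def isIdent (X : SymmSet) (e : simp X 1) : Prop :=
  ∃ v : simp X 0, e = X.map (Quiver.Hom.op
    ((fun _ => 0 : Fin 2 → Fin 1) : Ups.of 1 ⟶ Ups.of 0)) v

/-- The source vertex of an edge. -/
def srcE (X : SymmSet) (e : simp X 1) : simp X 0 :=
  X.map (Quiver.Hom.op ((fun _ => 0 : Fin 1 → Fin 2) : Ups.of 0 ⟶ Ups.of 1)) e

/-- `X` has (higher Segal) degree at most `k`: for each starry word `w` of
length `n+1 ≥ k+1`, if the last `k+1` faces `d_{n+1-k} w, …, d_{n+1} w` of `w`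
are Bousfield–Segal images of simplices, then so is `w`. -/
def HasDegLE (X : SymmSet) (k : ℕ) : Prop :=
  ∀ n, k ≤ n → ∀ w : Fin (n + 1) → simp X 1,
    (∀ a b, srcE X (w a) = srcE X (w b)) →
    (∀ i : Fin (n + 1), n ≤ (i : ℕ) + k →
      (fun j : Fin n => w (i.succAbove j)) ∈ Set.range (BS X n)) →
    w ∈ Set.range (BS X (n + 1))

/-- `X` has degree `d`: `d` is the least `k ≥ 1` with `HasDegLE X k`. -/
def DegreeIs (X : SymmSet) (d : ℕ) : Prop :=
  IsLeast {k | 1 ≤ k ∧ HasDegLE X k} d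

/-- `W`, with structure maps `i, j`, is a coproduct of `Y` and `Z` in the
category of partial groups. -/
def IsPGCoproduct (W Y Z : SymmSet) (i : Y ⟶ W) (j : Z ⟶ W) : Prop :=
  ∀ V : SymmSet, IsPartialGroup V → ∀ (f : Y ⟶ V) (g : Z ⟶ V),
    ∃! h : W ⟶ V, i ≫ h = f ∧ j ≫ h = g

/-- The nerve of a group `G`, as a symmetric set: an `n`-simplex is a matrix
`(g_{ij})` of elements of `G` satisfying the cocycle condition. -/
def grpNerve (G : Type) [Group G] : SymmSet where
  obj k := {M : Fin (k.unop.toNat + 1) → Fin (k.unop.toNat + 1) → G //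
      ∀ i j l, M i j * M j l = M i l}
  map f := TypeCat.ofHom fun M => ⟨fun a b => M.1 (f.unop a) (f.unop b),
    fun i j l => M.2 (f.unop i) (f.unop j) (f.unop l)⟩
  map_id := by intro k; ext M; rfl
  map_comp := by intros; ext M; rfl

/-- The full subcategory `Υ_{≤ n}` of `Ups` on the objects `[0], …, [n]`. -/
abbrev UpsLE (n : ℕ) := CategoryTheory.ObjectProperty.FullSubcategory (fun k : Ups => k.toNat ≤ n)

/-- The inclusion `Υ_{≤ n} → Υ`. -/
abbrev upsIncl (n : ℕ) : UpsLE n ⥤ Ups := ObjectProperty.ι _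

/-- The `n`-coskeleton of a symmetric set: the right Kan extension of the
restriction of `X` to `Υ_{≤ n}` along the inclusion. -/
noncomputable def cosk (n : ℕ) (X : SymmSet) : SymmSet :=
  ((upsIncl n).op.ran).obj ((upsIncl n).op ⋙ X)

/-- The canonical (unit) map `X ⟶ cosk_n X`. -/
noncomputable def coskUnit (n : ℕ) (X : SymmSet) : X ⟶ cosk n X :=
  (((upsIncl n).op.ranAdjunction (Type)).unit).app X

/-- The symmetric subset of `Mat(X₁)` whose `m`-simplices are the matrices all
of whose restrictions along maps `[n] → [m]` come from `n`-simplices of `X`. -/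
def coskSub (X : SymmSet) (n : ℕ) : SymmSet where
  obj k := {M : Fin (k.unop.toNat + 1) → Fin (k.unop.toNat + 1) → simp X 1 //
      ∀ α : Ups.of n ⟶ k.unop, (fun a b => M (α a) (α b)) ∈ Set.range (muMat X n)}
  map f := TypeCat.ofHom fun M => ⟨fun a b => M.1 (f.unop a) (f.unop b), fun α => M.2 (α ≫ f.unop)⟩
  map_id := by intro k; ext M; rfl
  map_comp := by intros; ext M; rfl

/-!
For spiny `X` the matrix map `μ` is injective, and in degrees `k ≤ n` every matrix of
`coskSub X n` is `μ` of a `k`-simplex (restrict along a retraction `[n] → [k]` of `[k] ↪ [n]`);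
so `μ` identifies `ι* X` with `ι* (coskSub X n)`. A map `Y ⟶ coskSub X n` is determined by its
matrix entries, i.e. by what it does in degree `1`, and every `η : ι* Y ⟶ ι* X` yields one,
`z ↦ (η (ε_{ab}* z))_{ab}`. Hence `coskSub X n`, like `cosk_n X = ι_* ι* X`, represents
`Y ↦ (ι* Y ⟶ ι* X)`, and the two are isomorphic by Yoneda.

A matrix `M` of `coskSub X n` is determined by its row `0`: for `i, j` pick `α : [n] → [m]`
hitting `0, i, j` (here `n ≥ 2` is needed); then `α* M = μ y` with `y` determined by its
row `0` since `X` is spiny. The entry `M₀₀` is a degenerate edge, forced as `X₀` has at most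
one element. So `coskSub X n` is spiny.
-/

lemma eps_comp {k m : ℕ} (α : Ups.of k ⟶ Ups.of m) (a b : Fin (k + 1)) :
    eps k a b ≫ α = eps m (α a) (α b) :=
  funext fun c => apply_ite α (c = 0) a b

lemma map_eps_map (X : SymmSet) {k m : ℕ} (α : Ups.of k ⟶ Ups.of m) (a b : Fin (k + 1))
    (z : simp X m) :
    X.map (eps k a b).op (X.map α.op z) = X.map (eps m (α a) (α b)).op z := by
  rw [← Functor.map_comp_apply, ← op_comp, eps_comp]

lemma Spiny.subsingleton_zero {X : SymmSet} (hX : Spiny X) : Subsingleton (simp X 0) :=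
  ⟨fun _ _ => hX 0 (funext fun t => t.elim0)⟩

lemma Spiny.muMat_injective {X : SymmSet} (hX : Spiny X) (k : ℕ) :
    Function.Injective (muMat X k) :=
  fun _ _ h => hX k (funext fun t => congrFun (congrFun h 0) t.succ)

lemma Spiny.muMat_diag_eq {X : SymmSet} (hX : Spiny X) {k m : ℕ} (x : simp X k)
    (y : simp X m) (i : Fin (k + 1)) (j : Fin (m + 1)) :
    muMat X k x i i = muMat X m y j j := by
  have := hX.subsingleton_zero
  calc muMat X k x i i
      = X.map (eps 0 0 0).op (X.map (Quiver.Hom.op (fun _ => i : Ups.of 0 ⟶ Ups.of k)) x) :=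
        (map_eps_map X (fun _ => i : Ups.of 0 ⟶ Ups.of k) 0 0 x).symm
    _ = X.map (eps 0 0 0).op (X.map (Quiver.Hom.op (fun _ => j : Ups.of 0 ⟶ Ups.of m)) y) :=
        congrArg _ (Subsingleton.elim _ _)
    _ = muMat X m y j j := map_eps_map X (fun _ => j : Ups.of 0 ⟶ Ups.of m) 0 0 y

lemma exists_retraction {k n : ℕ} (hk : k ≤ n) :
    ∃ (δ : Ups.of k ⟶ Ups.of n) (σ : Ups.of n ⟶ Ups.of k), δ ≫ σ = 𝟙 _ :=
  ⟨(Fin.castLE (by omega) : Fin (k + 1) → Fin (n + 1)),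
    fun a : Fin (n + 1) => (⟨min a k, by omega⟩ : Fin (k + 1)),
    funext fun a => Fin.ext (min_eq_left (Nat.lt_succ_iff.mp a.isLt))⟩

lemma coskSub_mem_range_muMat (X : SymmSet) {n k : ℕ} (hk : k ≤ n) (M : simp (coskSub X n) k) :
    M.1 ∈ Set.range (muMat X k) := by
  obtain ⟨δ, σ, hδσ⟩ := exists_retraction hk
  obtain ⟨y, hy⟩ := M.2 σ
  refine ⟨X.map δ.op y, funext fun a => funext fun b => ?_⟩
  have hσ : ∀ c, σ (δ c) = c := congrFun hδσ
  calc muMat X k (X.map δ.op y) a b = muMat X n y (δ a) (δ b) := map_eps_map X δ a b y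
    _ = M.1 (σ (δ a)) (σ (δ b)) := congrFun (congrFun hy _) _
    _ = M.1 a b := congrArg₂ M.1 (hσ a) (hσ b)

/-- The matrix map `μ_X`, corestricted to `coskSub X n`. -/
def muCoskSub (X : SymmSet) (n : ℕ) : X ⟶ coskSub X n where
  app m := TypeCat.ofHom fun x => ⟨muMat X m.unop.toNat x, fun α =>
    ⟨X.map α.op x, funext fun a => funext fun b => map_eps_map X (m := m.unop.toNat) α a b x⟩⟩
  naturality m m' f := by
    ext x
    exact Subtype.ext (funext fun a => funext fun b => map_eps_map X f.unop a b x)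

lemma muCoskSub_app_bijective (X : SymmSet) (hX : Spiny X) {n k : ℕ} (hk : k ≤ n) :
    Function.Bijective ((muCoskSub X n).app (op (Ups.of k))) := by
  refine ⟨fun x y h => hX.muMat_injective k (congrArg Subtype.val h), fun M => ?_⟩
  obtain ⟨x, hx⟩ := coskSub_mem_range_muMat X hk M
  exact ⟨x, Subtype.ext hx⟩

noncomputable def restrictCoskSubIso (X : SymmSet) (hX : Spiny X) (n : ℕ) :
    (upsIncl n).op ⋙ X ≅ (upsIncl n).op ⋙ coskSub X n :=
  have (k : (UpsLE n)ᵒᵖ) : IsIso ((Functor.whiskerLeft (upsIncl n).op (muCoskSub X n)).app k) :=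
    (isIso_iff_bijective _).2 (muCoskSub_app_bijective X hX k.unop.property)
  have := NatIso.isIso_of_isIso_app (Functor.whiskerLeft (upsIncl n).op (muCoskSub X n))
  asIso (Functor.whiskerLeft (upsIncl n).op (muCoskSub X n))

lemma eps_one_zero_one : eps 1 0 1 = 𝟙 (Ups.of 1) := by
  funext c
  fin_cases c <;> rfl

lemma muCoskSub_app_one_zero_one (X : SymmSet) (n : ℕ) (x : simp X 1) :
    ((muCoskSub X n).app (op (Ups.of 1)) x).1 0 1 = x := by
  show X.map (eps 1 0 1).op x = x
  rw [eps_one_zero_one, op_id, Functor.map_id_apply]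

lemma restrictCoskSubIso_inv_app_one (X : SymmSet) (hX : Spiny X) {n : ℕ} (hn : 1 ≤ n)
    (M : simp (coskSub X n) 1) :
    (restrictCoskSubIso X hX n).inv.app (op ⟨Ups.of 1, hn⟩) M = M.1 0 1 := by
  conv_rhs => rw [← Iso.inv_hom_id_app_apply (restrictCoskSubIso X hX n) (op ⟨Ups.of 1, hn⟩) M]
  exact (muCoskSub_app_one_zero_one X n _).symm

lemma app_one_map_eps {X Y : SymmSet} {n : ℕ} (hn : 1 ≤ n)
    (η : (upsIncl n).op ⋙ Y ⟶ (upsIncl n).op ⋙ X) {k : ℕ} (hk : k ≤ n)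
    (a b : Fin (k + 1)) (z : simp Y k) :
    η.app (op ⟨Ups.of 1, hn⟩) (Y.map (eps k a b).op z)
      = X.map (eps k a b).op (η.app (op ⟨Ups.of k, hk⟩) z) :=
  NatTrans.naturality_apply η (ObjectProperty.homMk (eps k a b) :
    (⟨Ups.of 1, hn⟩ : UpsLE n) ⟶ ⟨Ups.of k, hk⟩).op z

def toCoskSub (X : SymmSet) {n : ℕ} (hn : 1 ≤ n) {Y : SymmSet}
    (η : (upsIncl n).op ⋙ Y ⟶ (upsIncl n).op ⋙ X) : Y ⟶ coskSub X n where
  app m := TypeCat.ofHom fun z =>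
    ⟨fun a b => η.app (op ⟨Ups.of 1, hn⟩) (Y.map (eps m.unop.toNat a b).op z), fun α =>
      ⟨η.app (op ⟨Ups.of n, le_rfl⟩) (Y.map α.op z), funext fun a => funext fun b => by
        refine (app_one_map_eps hn η le_rfl a b _).symm.trans ?_
        exact congrArg (η.app _) (map_eps_map Y (m := m.unop.toNat) α a b z)⟩⟩
  naturality m m' f := by
    ext z
    refine Subtype.ext (funext fun a => funext fun b => ?_)
    exact congrArg (η.app _) (map_eps_map Y f.unop a b z)

lemma whiskerLeft_toCoskSub (X : SymmSet) {n : ℕ} (hn : 1 ≤ n) {Y : SymmSet}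
    (η : (upsIncl n).op ⋙ Y ⟶ (upsIncl n).op ⋙ X) :
    Functor.whiskerLeft (upsIncl n).op (toCoskSub X hn η) =
      η ≫ Functor.whiskerLeft (upsIncl n).op (muCoskSub X n) := by
  ext k z
  exact Subtype.ext (funext fun a => funext fun b =>
    app_one_map_eps hn η (k := k.unop.obj.toNat) k.unop.property a b z)

lemma toCoskSub_whiskerLeft_comp_inv (X : SymmSet) (hX : Spiny X) {n : ℕ} (hn : 1 ≤ n)
    {Y : SymmSet} (β : Y ⟶ coskSub X n) :
    toCoskSub X hn (Functor.whiskerLeft (upsIncl n).op β ≫ (restrictCoskSubIso X hX n).inv) =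
      β := by
  ext m z
  refine Subtype.ext (funext fun a => funext fun b => ?_)
  refine (restrictCoskSubIso_inv_app_one X hX hn _).trans ?_
  exact congrArg (fun t => t.1 0 1) (NatTrans.naturality_apply β (eps _ a b).op z)

noncomputable def coskSubRepresentableBy (X : SymmSet) (hX : Spiny X) {n : ℕ} (hn : 1 ≤ n) :
    (((Functor.whiskeringLeft _ _ Type).obj (upsIncl n).op).op ⋙
      yoneda.obj ((upsIncl n).op ⋙ X)).RepresentableBy (coskSub X n) where
  homEquiv :=
    { toFun β := Functor.whiskerLeft (upsIncl n).op β ≫ (restrictCoskSubIso X hX n).inv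
      invFun := toCoskSub X hn
      left_inv := toCoskSub_whiskerLeft_comp_inv X hX hn
      right_inv η := (Iso.comp_inv_eq _).2 (whiskerLeft_toCoskSub X hn η) }

noncomputable def coskIsoCoskSub (X : SymmSet) (hX : Spiny X) {n : ℕ} (hn : 1 ≤ n) :
    cosk n X ≅ coskSub X n :=
  (((upsIncl n).op.ranAdjunction Type).representableBy _).uniqueUpToIso
    (coskSubRepresentableBy X hX hn)

lemma Spiny.coskSub_diag_eq {X : SymmSet} (hX : Spiny X) {n k m : ℕ} (M : simp (coskSub X n) k)
    (M' : simp (coskSub X n) m) (i : Fin (k + 1)) (j : Fin (m + 1)) : M.1 i i = M'.1 j j := by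
  obtain ⟨y, hy⟩ := M.2 fun _ => i
  obtain ⟨y', hy'⟩ := M'.2 fun _ => j
  calc M.1 i i = muMat X n y 0 0 := (congrFun (congrFun hy 0) 0).symm
    _ = muMat X n y' 0 0 := hX.muMat_diag_eq y y' 0 0
    _ = M'.1 j j := congrFun (congrFun hy' 0) 0

lemma Spiny.coskSub_ext_of_row_zero {X : SymmSet} (hX : Spiny X) {n k : ℕ} (hn : 2 ≤ n)
    {M M' : simp (coskSub X n) k} (h : ∀ j, M.1 0 j = M'.1 0 j) : M = M' := by
  refine Subtype.ext (funext fun i => funext fun j => ?_)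
  let α : Ups.of n ⟶ Ups.of k := fun t => if t.1 = 1 then i else if t.1 = 2 then j else 0
  obtain ⟨y, hy⟩ := M.2 α
  obtain ⟨y', hy'⟩ := M'.2 α
  have hyy' : y = y' := hX n <| funext fun t => by
    show muMat X n y 0 t.succ = muMat X n y' 0 t.succ
    rw [hy, hy']
    exact h _
  let one : Fin (n + 1) := ⟨1, by omega⟩
  let two : Fin (n + 1) := ⟨2, by omega⟩
  calc M.1 i j = muMat X n y one two := (congrFun (congrFun hy one) two).symm
    _ = M'.1 i j := hyy' ▸ congrFun (congrFun hy' one) two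

theorem spiny_coskSub {X : SymmSet} (hX : Spiny X) {n : ℕ} (hn : 2 ≤ n) :
    Spiny (coskSub X n) := by
  intro k M M' h
  refine hX.coskSub_ext_of_row_zero hn fun j => ?_
  cases j using Fin.cases with
  | zero => exact hX.coskSub_diag_eq M M' 0 0
  | succ t => exact congrFun (congrFun (congrArg Subtype.val (congrFun h t)) 0) 1

/-- For a spiny symmetric set `X` and `n ≥ 2`, the `n`-coskeleton of `X` is
isomorphic to the symmetric subset of `Mat(X₁)` of matrices all of whose
`[n]`-restrictions lie in `μ_X(Xₙ)`; in particular `cosk_n X` is spiny. -/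
theorem cosk_iso_coskSub_and_spiny (X : SymmSet) (hX : Spiny X) (n : ℕ)
    (hn : 2 ≤ n) :
    Nonempty (cosk n X ≅ coskSub X n) ∧ Spiny (coskSub X n) :=
  ⟨⟨coskIsoCoskSub X hX (by omega)⟩, spiny_coskSub hX hn⟩
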